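/- Let M = ⊕_{s≥0} M(s) be an admissible V-module and set o_{n,m}(v) = v_{wt v - 1 + m - n}. Then the map v + O_{n,m}(V) ↦ o_{n,m}(v)|_{M(m)} is a well-defined homomorphism of A_n(V)-A_m(V)-bimodules from A_{n,m}(V) to Hom_C(M(m), M(n)). -/

import Mathlib

/-- Generalized binomial coefficient `C(n, k)` for `n : ℤ`, valued in `ℂ`. -/
noncomputable def cbinom (n : ℤ) (k : ℕ) : ℂ :=
  (∏ i ∈ Finset.range k, ((n : ℂ) - (i : ℂ))) / (Nat.factorial k : ℂ)

/-- A vertex operator algebra structure on a complex vector space `V`. -/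
structure VOA (V : Type) [AddCommGroup V] [Module ℂ V] where
  mode : V → ℤ → Module.End ℂ V
  vacuum : V
  conformal : V
  grading : ℤ → Submodule ℂ V
  internal : Function.Bijective (DirectSum.coeLinearMap grading)
  mode_add : ∀ (u v : V) (n : ℤ), mode (u + v) n = mode u n + mode v n
  mode_smul : ∀ (c : ℂ) (u : V) (n : ℤ), mode (c • u) n = c • mode u n
  truncation : ∀ u v : V, ∃ N : ℤ, ∀ n : ℤ, N ≤ n → mode u n v = 0
  vacuum_mem : vacuum ∈ grading 0
  conformal_mem : conformal ∈ grading 2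
  vacuum_mode : ∀ (v : V) (n : ℤ), mode vacuum n v = if n = -1 then v else 0
  creation : ∀ (u : V) (n : ℤ), 0 ≤ n → mode u n vacuum = 0
  creation_neg_one : ∀ u : V, mode u (-1) vacuum = u
  L0_eigen : ∀ (n : ℤ) (u : V), u ∈ grading n → mode conformal 1 u = (n : ℂ) • u
  Lneg1_deriv : ∀ (u : V) (n : ℤ), mode (mode conformal 0 u) n = (-n : ℂ) • mode u (n - 1)
  grading_mode : ∀ (r s m : ℤ) (u v : V), u ∈ grading r → v ∈ grading s →
    mode u m v ∈ grading (r + s - m - 1)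
  bounded_below : ∃ N : ℤ, ∀ n : ℤ, n < N → grading n = ⊥
  fin_dim : ∀ n : ℤ, FiniteDimensional ℂ (grading n)
  borcherds : ∀ (p q r : ℤ) (u v w : V),
    (∑ᶠ i : ℕ, cbinom p i • mode (mode u (r + i) v) (p + q - i) w) =
    ∑ᶠ i : ℕ, ((-1 : ℂ) ^ i * cbinom r i) •
      (mode u (p + r - i) (mode v (q + i) w)
        - (-1 : ℂ) ^ r • mode v (q + r - i) (mode u (p + i) w))

variable {V : Type} [AddCommGroup V] [Module ℂ V]

/-- Projection onto the weight-`n` subspace. -/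
noncomputable def VOA.proj (d : VOA V) (n : ℤ) : V →ₗ[ℂ] V :=
  (d.grading n).subtype ∘ₗ (DirectSum.component ℂ ℤ (fun m => d.grading m) n) ∘ₗ
    (LinearEquiv.ofBijective (DirectSum.coeLinearMap d.grading) d.internal).symm.toLinearMap

/-- `Res_z (1+z)^N z^{-k} Y(u,z)v` for a vector `u` regarded as having weight contribution `N`. -/
noncomputable def VOA.hres (d : VOA V) (N k : ℤ) (u v : V) : V :=
  ∑ᶠ i : ℕ, cbinom N i • d.mode u ((i : ℤ) - k) v

/-- `Res_z (1+z)^{wt u + m} z^{-k} Y(u,z)v`, extended bilinearly from homogeneous `u`. -/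
noncomputable def VOA.bres (d : VOA V) (m k : ℤ) (u v : V) : V :=
  ∑ᶠ n : ℤ, d.hres (n + m) k (d.proj n u) v

/-- The Zhu product `u * v`. -/
noncomputable def VOA.star (d : VOA V) (u v : V) : V := d.bres 0 1 u v

/-- The Zhu circle product `u ∘ v`. -/
noncomputable def VOA.circ (d : VOA V) (u v : V) : V := d.bres 0 2 u v

/-- The subspace `O(V)` spanned by all `u ∘ v`. -/
def VOA.Ozhu (d : VOA V) : Submodule ℂ V := Submodule.span ℂ {w : V | ∃ u v : V, w = d.circ u v}

/-- The product `u ∘_n v`. -/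
noncomputable def VOA.circn (d : VOA V) (n : ℕ) (u v : V) : V := d.bres n (2 * n + 2) u v

/-- The product `u *_n v` of Dong–Li–Mason. -/
noncomputable def VOA.starn (d : VOA V) (n : ℕ) (u v : V) : V :=
  ∑ m ∈ Finset.range (n + 1),
    ((-1 : ℂ) ^ m * cbinom ((m : ℤ) + (n : ℤ)) n) • d.bres n ((n : ℤ) + (m : ℤ) + 1) u v

/-- The subspace `O_n(V)`. -/
def VOA.On (d : VOA V) (n : ℕ) : Submodule ℂ V :=
  Submodule.span ℂ ({w : V | ∃ u v : V, w = d.circn n u v} ∪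
    {w : V | ∃ u : V, w = d.mode d.conformal 0 u + d.mode d.conformal 1 u})

/-- The Dong–Jiang product `u *_{m,p}^n v`. -/
noncomputable def VOA.starmpn (d : VOA V) (m p n : ℕ) (u v : V) : V :=
  ∑ i ∈ Finset.range (p + 1),
    ((-1 : ℂ) ^ i * cbinom ((m : ℤ) + (n : ℤ) - (p : ℤ) + (i : ℤ)) i) •
      d.bres m ((m : ℤ) + (n : ℤ) - (p : ℤ) + (i : ℤ) + 1) u v

/-- The Dong–Jiang product `u ∘_m^n v`. -/
noncomputable def VOA.circmn (d : VOA V) (n m : ℕ) (u v : V) : V :=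
  d.bres m ((n : ℤ) + (m : ℤ) + 2) u v

/-- The subspace `O_{n,m}(V) = O'_{n,m}(V) + O''_{n,m}(V) + O'''_{n,m}(V)` of Dong–Jiang. -/
def VOA.Onm (d : VOA V) (n m : ℕ) : Submodule ℂ V :=
  Submodule.span ℂ (
    {w : V | ∃ u v : V, w = d.circmn n m u v} ∪
    {w : V | ∃ u : V, w = d.mode d.conformal 0 u + d.mode d.conformal 1 u
        + (((m : ℂ) - (n : ℂ)) • u)} ∪
    {w : V | ∃ (u a b c : V) (p₁ p₂ p₃ : ℕ), w = d.starmpn m p₃ n u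
        (d.starmpn m p₁ p₃ (d.starmpn p₁ p₂ p₃ a b) c
          - d.starmpn m p₂ p₃ a (d.starmpn m p₁ p₂ b c))} ∪
    {w : V | ∃ (p : ℕ) (u x v : V), x ∈ d.On p ∧ w = d.starmpn m p n (d.starmpn p p n u x) v})

/-- The subspace `C_2(V)` spanned by the `u_{-2} v`. -/
def VOA.C2 (d : VOA V) : Submodule ℂ V := Submodule.span ℂ {w : V | ∃ u v : V, w = d.mode u (-2) v}

/-- `V` is a simple vertex operator algebra: its only ideals are `0` and `V`. -/
def VOA.IsSimpleVOA (d : VOA V) : Prop :=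
  (∃ v : V, v ≠ 0) ∧ ∀ P : Submodule ℂ V,
    (∀ (u : V) (n : ℤ), ∀ w ∈ P, d.mode u n w ∈ P) → P = ⊥ ∨ P = ⊤

/-- A weak module for the vertex operator algebra `d`. -/
structure WeakMod (d : VOA V) (M : Type) [AddCommGroup M] [Module ℂ M] where
  act : V → ℤ → Module.End ℂ M
  act_add : ∀ (u v : V) (n : ℤ), act (u + v) n = act u n + act v n
  act_smul : ∀ (c : ℂ) (u : V) (n : ℤ), act (c • u) n = c • act u n
  truncation : ∀ (u : V) (w : M), ∃ N : ℤ, ∀ n : ℤ, N ≤ n → act u n w = 0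
  vacuum_act : ∀ (w : M) (n : ℤ), act d.vacuum n w = if n = -1 then w else 0
  borcherds : ∀ (p q r : ℤ) (u v : V) (w : M),
    (∑ᶠ i : ℕ, cbinom p i • act (d.mode u (r + i) v) (p + q - i) w) =
    ∑ᶠ i : ℕ, ((-1 : ℂ) ^ i * cbinom r i) •
      (act u (p + r - i) (act v (q + i) w)
        - (-1 : ℂ) ^ r • act v (q + r - i) (act u (p + i) w))

/-- An admissible (ℤ₊-graded) module for the vertex operator algebra `d`. -/
structure AdmMod (d : VOA V) (M : Type) [AddCommGroup M] [Module ℂ M]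
    extends WeakMod d M where
  gr : ℤ → Submodule ℂ M
  gr_internal : Function.Bijective (DirectSum.coeLinearMap gr)
  gr_neg : ∀ n : ℤ, n < 0 → gr n = ⊥
  gr_act : ∀ (r : ℤ) (u : V), u ∈ d.grading r → ∀ (m n : ℤ) (w : M), w ∈ gr n →
    act u m w ∈ gr (r + n - m - 1)

variable {M : Type} [AddCommGroup M] [Module ℂ M]

/-- The zero-mode `o(v) = v_{wt v - 1}`, extended linearly from homogeneous `v`. -/
noncomputable def WeakMod.o {d : VOA V} (W : WeakMod d M) (v : V) (w : M) : M :=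
  ∑ᶠ r : ℤ, W.act (d.proj r v) (r - 1) w

/-- The mode `o_t(v) = v_{wt v - 1 - t}`, extended linearly from homogeneous `v`. -/
noncomputable def WeakMod.ot {d : VOA V} (W : WeakMod d M) (t : ℤ) (v : V) (w : M) : M :=
  ∑ᶠ r : ℤ, W.act (d.proj r v) (r - 1 - t) w

/-- The subspace `Ω_n(M)` of a weak module. -/
def WeakMod.OmegaSet {d : VOA V} (W : WeakMod d M) (n : ℕ) : Set M :=
  {w : M | ∀ (r : ℤ) (u : V), u ∈ d.grading r → ∀ m : ℤ, m > r - 1 + (n : ℤ) → W.act u m w = 0}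

/-- A subspace stable under all modes. -/
def WeakMod.IsStable {d : VOA V} (W : WeakMod d M) (P : Submodule ℂ M) : Prop :=
  ∀ (u : V) (n : ℤ), ∀ w ∈ P, W.act u n w ∈ P

/-- A subspace compatible with the grading of an admissible module. -/
def AdmMod.IsGraded {d : VOA V} (A : AdmMod d M) (P : Submodule ℂ M) : Prop :=
  P = ⨆ n : ℤ, (P ⊓ A.gr n)

/-- `P` is an irreducible admissible submodule. -/
def AdmMod.IrredSub {d : VOA V} (A : AdmMod d M) (P : Submodule ℂ M) : Prop :=
  P ≠ ⊥ ∧ A.toWeakMod.IsStable P ∧ A.IsGraded P ∧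
    ∀ Q : Submodule ℂ M, Q ≤ P → A.toWeakMod.IsStable Q → A.IsGraded Q → Q = ⊥ ∨ Q = P

/-- The admissible module is irreducible. -/
def AdmMod.IsIrreducible {d : VOA V} (A : AdmMod d M) : Prop :=
  (∃ w : M, w ≠ 0) ∧
    ∀ P : Submodule ℂ M, A.toWeakMod.IsStable P → A.IsGraded P → P = ⊥ ∨ P = ⊤

/-- Rationality: every admissible module is a direct sum of irreducible admissible submodules. -/
def Rational (d : VOA V) : Prop :=
  ∀ (M : Type) [AddCommGroup M] [Module ℂ M] (A : AdmMod d M),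
    ∃ (ι : Type) (f : ι → Submodule ℂ M),
      (∀ i, A.IrredSub (f i)) ∧ iSupIndep f ∧ (⨆ i, f i) = ⊤

/-- Equivalence of admissible modules. -/
def AdmEquiv {d : VOA V} {M₁ M₂ : Type} [AddCommGroup M₁] [Module ℂ M₁]
    [AddCommGroup M₂] [Module ℂ M₂] (A₁ : AdmMod d M₁) (A₂ : AdmMod d M₂) : Prop :=
  ∃ e : M₁ ≃ₗ[ℂ] M₂, ∀ (u : V) (n : ℤ) (w : M₁), e (A₁.act u n w) = A₂.act u n (e w)

/-- An ordinary-module structure on a weak module: a `ℂ`-grading by finite dimensional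
`L(0)`-eigenspaces, bounded below in each coset of `ℤ`. -/
structure OrdinaryStruct {d : VOA V} (W : WeakMod d M) where
  grc : ℂ → Submodule ℂ M
  internal : Function.Bijective (DirectSum.coeLinearMap grc)
  eigen : ∀ (lam : ℂ) (w : M), w ∈ grc lam → W.act d.conformal 1 w = lam • w
  findim : ∀ lam : ℂ, FiniteDimensional ℂ (grc lam)
  bounded : ∀ lam : ℂ, ∃ N : ℤ, ∀ n : ℤ, n < N → grc (lam + (n : ℂ)) = ⊥

/-- An admissible module is ordinary. -/
def AdmMod.IsOrdinary {d : VOA V} (A : AdmMod d M) : Prop :=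
  Nonempty (OrdinaryStruct A.toWeakMod)

/-- A realization of the quotient associative algebra `V/Osub` with product induced by `mu`. -/
structure Realization (Osub : Submodule ℂ V) (mu : V → V → V) (one : V) where
  carrier : Type
  [ring : Ring carrier]
  [alg : Algebra ℂ carrier]
  emb : V →ₗ[ℂ] carrier
  surj : Function.Surjective emb
  ker_eq : LinearMap.ker emb = Osub
  mul_compat : ∀ u v : V, emb (mu u v) = emb u * emb v
  one_compat : emb one = 1

/-- The realized algebra is semisimple. -/
def Realization.Semisimple {Osub : Submodule ℂ V} {mu : V → V → V} {one : V}
    (R : Realization Osub mu one) : Prop :=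
  letI := R.ring; IsSemisimpleRing R.carrier

/-- The realized algebra is finite dimensional over `ℂ`. -/
def Realization.FinDim {Osub : Submodule ℂ V} {mu : V → V → V} {one : V}
    (R : Realization Osub mu one) : Prop :=
  letI := R.ring; letI := R.alg; FiniteDimensional ℂ R.carrier

/-- A module over the quotient algebra `V/Osub`, given as a representation of `V`
killing `Osub` and multiplicative for `mu`. -/
structure RepOf (Osub : Submodule ℂ V) (mu : V → V → V) (one : V)
    (U : Type) [AddCommGroup U] [Module ℂ U] where
  rep : V →ₗ[ℂ] Module.End ℂ U
  kills : ∀ v ∈ Osub, rep v = 0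
  mul_compat : ∀ u v : V, rep (mu u v) = rep u * rep v
  one_compat : rep one = 1

/-- Simplicity of such a representation. -/
def RepOf.IsSimple {Osub : Submodule ℂ V} {mu : V → V → V} {one : V}
    {U : Type} [AddCommGroup U] [Module ℂ U] (Z : RepOf Osub mu one U) : Prop :=
  (∃ u : U, u ≠ 0) ∧
    ∀ P : Submodule ℂ U, (∀ v : V, ∀ x ∈ P, Z.rep v x ∈ P) → P = ⊥ ∨ P = ⊤

/-- Equivalence of two such representations. -/
def RepEquiv {Osub : Submodule ℂ V} {mu : V → V → V} {one : V}
    {U₁ U₂ : Type} [AddCommGroup U₁] [Module ℂ U₁] [AddCommGroup U₂] [Module ℂ U₂]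
    (Z₁ : RepOf Osub mu one U₁) (Z₂ : RepOf Osub mu one U₂) : Prop :=
  ∃ e : U₁ ≃ₗ[ℂ] U₂, ∀ (v : V) (x : U₁), e (Z₁.rep v x) = Z₂.rep v (e x)

lemma cbinom_zero' (a : ℤ) : cbinom a 0 = 1 := by simp [cbinom]

lemma cbinom_one' (a : ℤ) : cbinom a 1 = (a : ℂ) := by simp [cbinom]

lemma factorial_ne_zero_c (k : ℕ) : (Nat.factorial k : ℂ) ≠ 0 :=
  Nat.cast_ne_zero.mpr (Nat.factorial_ne_zero k)

lemma cbinom_pascal (a : ℤ) (k : ℕ) :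
    cbinom a (k + 1) = cbinom (a - 1) (k + 1) + cbinom (a - 1) k := by
  have hk : (Nat.factorial k : ℂ) ≠ 0 := factorial_ne_zero_c k
  have hk1 : ((k : ℂ) + 1) ≠ 0 := Nat.cast_add_one_ne_zero k
  have e1 : ∏ i ∈ Finset.range (k + 1), ((a : ℂ) - i)
      = (a : ℂ) * ∏ i ∈ Finset.range k, (((a - 1 : ℤ) : ℂ) - i) := by
    rw [Finset.prod_range_succ']
    rw [Finset.prod_congr rfl (fun i (_ : i ∈ Finset.range k) => by push_cast; ring :
      ∀ i ∈ Finset.range k, ((a : ℂ) - ((i : ℕ) + 1 : ℕ)) = (((a - 1 : ℤ) : ℂ) - i))]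
    push_cast
    ring
  have e2 : ∏ i ∈ Finset.range (k + 1), (((a - 1 : ℤ) : ℂ) - i)
      = (∏ i ∈ Finset.range k, (((a - 1 : ℤ) : ℂ) - i)) * ((a : ℂ) - 1 - k) := by
    rw [Finset.prod_range_succ]; push_cast; ring
  unfold cbinom
  rw [e1, e2, Nat.factorial_succ]
  push_cast
  field_simp
  ring

lemma cbinom_vandermonde (l : ℕ) (a b : ℤ) :
    ∑ i ∈ Finset.range (l + 1), cbinom a i * cbinom b (l - i) = cbinom (a + b) l := by
  induction l generalizing a with
  | zero => simp [cbinom_zero']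
  | succ l ih =>
    -- recursion step: S_{l+1}(a) = S_{l+1}(a-1) + S_l(a-1)
    have step : ∀ x : ℤ,
        ∑ i ∈ Finset.range (l + 2), cbinom (x + 1) i * cbinom b (l + 1 - i)
        = ∑ i ∈ Finset.range (l + 2), cbinom x i * cbinom b (l + 1 - i)
          + ∑ i ∈ Finset.range (l + 1), cbinom x i * cbinom b (l - i) := by
      intro x
      rw [Finset.sum_range_succ' (fun i => cbinom (x + 1) i * cbinom b (l + 1 - i)) (l + 1)]
      rw [Finset.sum_range_succ' (fun i => cbinom x i * cbinom b (l + 1 - i)) (l + 1)]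
      have pasc : ∀ i : ℕ, cbinom (x + 1) (i + 1) = cbinom x (i + 1) + cbinom x i := by
        intro i
        have := cbinom_pascal (x + 1) i
        simpa using this
      have : ∀ i ∈ Finset.range (l + 1),
          cbinom (x + 1) (i + 1) * cbinom b (l + 1 - (i + 1))
          = cbinom x (i + 1) * cbinom b (l + 1 - (i + 1)) + cbinom x i * cbinom b (l - i) := by
        intro i _
        have hnat : l + 1 - (i + 1) = l - i := by omega
        rw [hnat, pasc i, add_mul]
      rw [Finset.sum_congr rfl this, Finset.sum_add_distrib]
      simp [cbinom_zero']
      ring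
    induction a using Int.induction_on with
    | zero =>
      -- a = 0 : all terms with i ≥ 1 vanish
      have h0 : ∀ i : ℕ, 1 ≤ i → cbinom 0 i = 0 := by
        intro i hi
        unfold cbinom
        rw [Finset.prod_eq_zero (Finset.mem_range.mpr (by omega : 0 < i))]
        · simp
        · simp
      rw [Finset.sum_eq_single 0]
      · simp [cbinom_zero']
      · intro i _ hi
        rw [h0 i (by omega), zero_mul]
      · intro h; simp at h
    | succ a ha =>
      rw [step (a:ℤ), ha, ih (a:ℤ)]
      have := cbinom_pascal (a + 1 + b) l
      have harg : (a + 1 + b - 1 : ℤ) = a + b := by ring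
      rw [harg] at this
      rw [← this]
    | pred a ha =>
      have := step (-(a:ℤ) - 1)
      have harg : (-(a:ℤ) - 1 + 1) = -(a:ℤ) := by ring
      rw [harg] at this
      rw [ha, ih (-(a:ℤ) - 1)] at this
      have pasc := cbinom_pascal (-(a:ℤ) + b) l
      have harg2 : (-(a:ℤ) + b - 1) = -(a:ℤ) - 1 + b := by ring
      rw [harg2] at pasc
      linear_combination pasc - this

lemma cbinom_neg (N : ℤ) (j : ℕ) :
    cbinom (-(N + 1)) j = (-1 : ℂ) ^ j * cbinom (N + j) j := by
  unfold cbinom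
  rw [← mul_div_assoc]
  congr 1
  have e1 : ∀ i ∈ Finset.range j, ((-(N + 1) : ℤ) : ℂ) - i = (-1) * ((N : ℂ) + 1 + i) := by
    intro i _; push_cast; ring
  rw [Finset.prod_congr rfl e1, Finset.prod_mul_distrib, Finset.prod_const, Finset.card_range]
  congr 1
  rw [← Finset.prod_range_reflect (fun i => (N : ℂ) + 1 + i) j]
  refine Finset.prod_congr rfl fun i hi => ?_
  rw [Finset.mem_range] at hi
  have h1 : (1 : ℕ) ≤ j := by omega
  have h2 : i ≤ j - 1 := by omega
  have : ((j - 1 - i : ℕ) : ℂ) = (j : ℂ) - 1 - i := by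
    push_cast [Nat.cast_sub h2, Nat.cast_sub h1]
    ring
  simp only [this]
  push_cast
  ring

lemma cbinom_nat_lt (a : ℤ) (l : ℕ) (h0 : 0 ≤ a) (h1 : a < l) : cbinom a l = 0 := by
  unfold cbinom
  have hmem : a.toNat ∈ Finset.range l := Finset.mem_range.mpr (by omega)
  have hz : ((a : ℤ) : ℂ) - ((a.toNat : ℕ) : ℂ) = 0 := by
    have := Int.toNat_of_nonneg h0
    rw [show ((a.toNat : ℕ) : ℂ) = ((a.toNat : ℤ) : ℂ) by push_cast; ring, this, sub_self]
  rw [Finset.prod_eq_zero hmem hz, zero_div]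

lemma cbinom_key (M₀ : ℤ) (l : ℕ) :
    ∑ i ∈ Finset.range (l + 1), cbinom (-(M₀ + 1)) i * cbinom (M₀ + l) (l - i)
      = if l = 0 then 1 else 0 := by
  rw [cbinom_vandermonde]
  rcases Nat.eq_zero_or_pos l with h | h
  · subst h; simp [cbinom_zero']
  · rw [if_neg (by omega)]
    have harg : (-(M₀ + 1) + (M₀ + l) : ℤ) = (l : ℤ) - 1 := by ring
    rw [harg]
    exact cbinom_nat_lt _ l (by omega) (by omega)

section Infra

lemma lmap_finsum {i : Type} {A B : Type*} [AddCommGroup A] [Module ℂ A]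
    [AddCommGroup B] [Module ℂ B] (f : A →ₗ[ℂ] B) (g : i → A)
    (h : (Function.support g).Finite) : f (∑ᶠ j, g j) = ∑ᶠ j, f (g j) :=
  f.toAddMonoidHom.map_finsum_plift g (h.preimage PLift.down_injective.injOn)

lemma finsum_mem_submodule {i : Type} {A : Type*} [AddCommGroup A] [Module ℂ A]
    (p : Submodule ℂ A) (f : i → A) (h : ∀ j, f j ∈ p) : (∑ᶠ j, f j) ∈ p := by
  by_cases hf : (Function.support f).Finite
  · rw [finsum_eq_sum f hf]
    exact Submodule.sum_mem _ fun j _ => h j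
  · rw [finsum_of_infinite_support hf]
    exact p.zero_mem

end Infra

namespace VOA

variable {V : Type} [AddCommGroup V] [Module ℂ V] (d : VOA V)

lemma mode_zero_left (n : ℤ) : d.mode 0 n = 0 := by
  have := d.mode_smul 0 0 n
  simpa using this

lemma proj_apply (n : ℤ) (u : V) :
    d.proj n u = ((LinearEquiv.ofBijective (DirectSum.coeLinearMap d.grading)
      d.internal).symm u n : V) := rfl

lemma proj_mem (n : ℤ) (u : V) : d.proj n u ∈ d.grading n := by
  rw [proj_apply]; exact SetLike.coe_mem _

lemma proj_eq_self {r : ℤ} {u : V} (h : u ∈ d.grading r) : d.proj r u = u := by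
  rw [proj_apply, DirectSum.IsInternal.ofBijective_coeLinearMap_of_mem d.internal h]

lemma proj_eq_zero {r n : ℤ} {u : V} (h : u ∈ d.grading r) (hn : r ≠ n) :
    d.proj n u = 0 := by
  rw [proj_apply, DirectSum.IsInternal.ofBijective_coeLinearMap_of_mem_ne d.internal hn h]
  rfl

lemma proj_support (u : V) : {n : ℤ | d.proj n u ≠ 0}.Finite := by
  apply Set.Finite.subset (DFinsupp.finite_support
    ((LinearEquiv.ofBijective (DirectSum.coeLinearMap d.grading) d.internal).symm u))
  intro n hn
  simp only [Set.mem_setOf_eq, proj_apply] at hn ⊢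
  intro h0
  apply hn
  rw [h0]
  rfl

lemma homog_span_top : Submodule.span ℂ {u : V | ∃ r, u ∈ d.grading r} = ⊤ := by
  rw [eq_top_iff]
  intro u _
  have hu : u = DirectSum.coeLinearMap d.grading
      ((LinearEquiv.ofBijective (DirectSum.coeLinearMap d.grading) d.internal).symm u) := by
    conv_lhs => rw [← (LinearEquiv.ofBijective (DirectSum.coeLinearMap d.grading)
      d.internal).apply_symm_apply u]
    rfl
  rw [hu]
  generalize ((LinearEquiv.ofBijective (DirectSum.coeLinearMap d.grading)
    d.internal).symm u) = x
  induction x using DirectSum.induction_on with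
  | zero => simp
  | of i b => rw [DirectSum.coeLinearMap_of]; exact Submodule.subset_span ⟨i, b.2⟩
  | add x y hx hy => rw [map_add]; exact Submodule.add_mem _ hx hy

lemma homog_induction {P : V → Prop} (h0 : P 0)
    (hadd : ∀ u v, P u → P v → P (u + v))
    (hsmul : ∀ (c : ℂ) u, P u → P (c • u))
    (hhom : ∀ (r : ℤ) u, u ∈ d.grading r → P u) (u : V) : P u := by
  have hu : u ∈ Submodule.span ℂ {u : V | ∃ r, u ∈ d.grading r} := by
    rw [d.homog_span_top]; trivial
  induction hu using Submodule.span_induction with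
  | mem x hx => obtain ⟨r, hr⟩ := hx; exact hhom r x hr
  | zero => exact h0
  | add x y _ _ px py => exact hadd x y px py
  | smul c x _ px => exact hsmul c x px

lemma hres_support (N k : ℤ) (u v : V) :
    (Function.support fun i : ℕ => cbinom N i • d.mode u ((i : ℤ) - k) v).Finite := by
  obtain ⟨N₀, hN₀⟩ := d.truncation u v
  apply Set.Finite.subset (Set.finite_Iio (N₀ + k).toNat)
  intro i hi
  simp only [Function.mem_support] at hi
  simp only [Set.mem_Iio]
  rw [Int.lt_toNat]
  by_contra h
  push_neg at h
  apply hi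
  rw [hN₀ _ (by omega)]
  simp

lemma hres_zero_left (N k : ℤ) (v : V) : d.hres N k 0 v = 0 := by
  unfold VOA.hres
  refine finsum_eq_zero_of_forall_eq_zero fun i => ?_
  rw [d.mode_zero_left, LinearMap.zero_apply, smul_zero]

lemma hres_zero_right (N k : ℤ) (u : V) : d.hres N k u 0 = 0 := by
  unfold VOA.hres
  refine finsum_eq_zero_of_forall_eq_zero fun i => ?_
  rw [map_zero, smul_zero]

lemma hres_add_left (N k : ℤ) (u u' v : V) :
    d.hres N k (u + u') v = d.hres N k u v + d.hres N k u' v := by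
  unfold VOA.hres
  rw [← finsum_add_distrib (d.hres_support N k u v) (d.hres_support N k u' v)]
  exact finsum_congr fun i => by rw [d.mode_add]; simp [smul_add]

lemma hres_smul_left (N k : ℤ) (c : ℂ) (u v : V) :
    d.hres N k (c • u) v = c • d.hres N k u v := by
  unfold VOA.hres
  rw [smul_finsum' c (d.hres_support N k u v)]
  exact finsum_congr fun i => by rw [d.mode_smul, LinearMap.smul_apply]; exact smul_comm _ _ _

lemma hres_add_right (N k : ℤ) (u v v' : V) :
    d.hres N k u (v + v') = d.hres N k u v + d.hres N k u v' := by
  unfold VOA.hres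
  rw [← finsum_add_distrib (d.hres_support N k u v) (d.hres_support N k u v')]
  exact finsum_congr fun i => by rw [map_add, smul_add]

lemma hres_smul_right (N k : ℤ) (c : ℂ) (u v : V) :
    d.hres N k u (c • v) = c • d.hres N k u v := by
  unfold VOA.hres
  rw [smul_finsum' c (d.hres_support N k u v)]
  exact finsum_congr fun i => by rw [map_smul]; exact smul_comm _ _ _

lemma bres_support (m k : ℤ) (u v : V) :
    (Function.support fun n : ℤ => d.hres (n + m) k (d.proj n u) v).Finite := by
  apply (d.proj_support u).subset
  intro n hn
  simp only [Function.mem_support] at hn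
  simp only [Set.mem_setOf_eq]
  intro h0
  exact hn (by rw [h0, d.hres_zero_left])

lemma bres_homog {r : ℤ} {u : V} (h : u ∈ d.grading r) (m k : ℤ) (v : V) :
    d.bres m k u v = d.hres (r + m) k u v := by
  unfold VOA.bres
  rw [finsum_eq_single _ r fun n hn => by
    rw [d.proj_eq_zero h (Ne.symm hn), d.hres_zero_left]]
  rw [d.proj_eq_self h]

lemma bres_zero_left (m k : ℤ) (v : V) : d.bres m k 0 v = 0 := by
  unfold VOA.bres
  simp [d.hres_zero_left]

lemma bres_zero_right (m k : ℤ) (u : V) : d.bres m k u 0 = 0 := by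
  unfold VOA.bres
  simp [d.hres_zero_right]

lemma bres_add_left (m k : ℤ) (u u' v : V) :
    d.bres m k (u + u') v = d.bres m k u v + d.bres m k u' v := by
  unfold VOA.bres
  rw [← finsum_add_distrib (d.bres_support m k u v) (d.bres_support m k u' v)]
  exact finsum_congr fun n => by rw [map_add, d.hres_add_left]

lemma bres_smul_left (m k : ℤ) (c : ℂ) (u v : V) :
    d.bres m k (c • u) v = c • d.bres m k u v := by
  unfold VOA.bres
  rw [smul_finsum' c (d.bres_support m k u v)]
  exact finsum_congr fun n => by rw [map_smul, d.hres_smul_left]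

lemma bres_add_right (m k : ℤ) (u v v' : V) :
    d.bres m k u (v + v') = d.bres m k u v + d.bres m k u v' := by
  unfold VOA.bres
  rw [← finsum_add_distrib (d.bres_support m k u v) (d.bres_support m k u v')]
  exact finsum_congr fun n => by rw [d.hres_add_right]

lemma bres_smul_right (m k : ℤ) (c : ℂ) (u v : V) :
    d.bres m k u (c • v) = c • d.bres m k u v := by
  unfold VOA.bres
  rw [smul_finsum' c (d.bres_support m k u v)]
  exact finsum_congr fun n => by rw [d.hres_smul_right]

lemma starmpn_add_left (m p n : ℕ) (u u' v : V) :
    d.starmpn m p n (u + u') v = d.starmpn m p n u v + d.starmpn m p n u' v := by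
  unfold VOA.starmpn
  rw [← Finset.sum_add_distrib]
  exact Finset.sum_congr rfl fun i _ => by rw [d.bres_add_left, smul_add]

lemma starmpn_smul_left (m p n : ℕ) (c : ℂ) (u v : V) :
    d.starmpn m p n (c • u) v = c • d.starmpn m p n u v := by
  unfold VOA.starmpn
  rw [Finset.smul_sum]
  exact Finset.sum_congr rfl fun i _ => by rw [d.bres_smul_left, smul_comm]

lemma starmpn_zero_left (m p n : ℕ) (v : V) : d.starmpn m p n 0 v = 0 := by
  unfold VOA.starmpn
  simp [d.bres_zero_left]

lemma starmpn_add_right (m p n : ℕ) (u v v' : V) :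
    d.starmpn m p n u (v + v') = d.starmpn m p n u v + d.starmpn m p n u v' := by
  unfold VOA.starmpn
  rw [← Finset.sum_add_distrib]
  exact Finset.sum_congr rfl fun i _ => by rw [d.bres_add_right, smul_add]

lemma starmpn_smul_right (m p n : ℕ) (c : ℂ) (u v : V) :
    d.starmpn m p n u (c • v) = c • d.starmpn m p n u v := by
  unfold VOA.starmpn
  rw [Finset.smul_sum]
  exact Finset.sum_congr rfl fun i _ => by rw [d.bres_smul_right, smul_comm]

lemma starmpn_zero_right (m p n : ℕ) (u : V) : d.starmpn m p n u 0 = 0 := by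
  unfold VOA.starmpn
  simp [d.bres_zero_right]

end VOA


namespace WeakMod

variable {V M : Type} [AddCommGroup V] [Module ℂ V] [AddCommGroup M] [Module ℂ M]
variable {d : VOA V} (W : WeakMod d M)

lemma act_zero_left (n : ℤ) : W.act 0 n = 0 := by
  have := W.act_smul 0 0 n
  simpa using this

lemma ot_support (t : ℤ) (v : V) (w : M) :
    (Function.support fun r : ℤ => W.act (d.proj r v) (r - 1 - t) w).Finite := by
  apply (d.proj_support v).subset
  intro r hr
  simp only [Function.mem_support] at hr
  simp only [Set.mem_setOf_eq]
  intro h0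
  exact hr (by rw [h0, W.act_zero_left, LinearMap.zero_apply])

lemma ot_add_left (t : ℤ) (a b : V) (w : M) :
    W.ot t (a + b) w = W.ot t a w + W.ot t b w := by
  unfold WeakMod.ot
  rw [← finsum_add_distrib (W.ot_support t a w) (W.ot_support t b w)]
  exact finsum_congr fun r => by rw [map_add, W.act_add, LinearMap.add_apply]

lemma ot_smul_left (t : ℤ) (c : ℂ) (a : V) (w : M) :
    W.ot t (c • a) w = c • W.ot t a w := by
  unfold WeakMod.ot
  rw [smul_finsum' c (W.ot_support t a w)]
  exact finsum_congr fun r => by rw [map_smul, W.act_smul, LinearMap.smul_apply]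

lemma ot_zero_left (t : ℤ) (w : M) : W.ot t 0 w = 0 := by
  unfold WeakMod.ot
  refine finsum_eq_zero_of_forall_eq_zero fun r => ?_
  rw [map_zero, W.act_zero_left, LinearMap.zero_apply]

lemma ot_sub_left (t : ℤ) (a b : V) (w : M) :
    W.ot t (a - b) w = W.ot t a w - W.ot t b w := by
  have h : a - b = a + (-1 : ℂ) • b := by rw [neg_one_smul, ← sub_eq_add_neg]
  rw [h, W.ot_add_left, W.ot_smul_left, neg_one_smul, ← sub_eq_add_neg]

noncomputable def otV (t : ℤ) (w : M) : V →ₗ[ℂ] M where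
  toFun v := W.ot t v w
  map_add' a b := W.ot_add_left t a b w
  map_smul' c a := W.ot_smul_left t c a w

lemma otV_apply (t : ℤ) (w : M) (v : V) : W.otV t w v = W.ot t v w := rfl

lemma ot_zero_right (t : ℤ) (v : V) : W.ot t v 0 = 0 := by
  unfold WeakMod.ot
  refine finsum_eq_zero_of_forall_eq_zero fun r => ?_
  rw [map_zero]

lemma ot_add_right (t : ℤ) (v : V) (x y : M) :
    W.ot t v (x + y) = W.ot t v x + W.ot t v y := by
  unfold WeakMod.ot
  rw [← finsum_add_distrib (W.ot_support t v x) (W.ot_support t v y)]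
  exact finsum_congr fun r => by rw [map_add]

lemma ot_smul_right (t : ℤ) (c : ℂ) (v : V) (x : M) :
    W.ot t v (c • x) = c • W.ot t v x := by
  unfold WeakMod.ot
  rw [smul_finsum' c (W.ot_support t v x)]
  exact finsum_congr fun r => by rw [map_smul]

lemma ot_homog {r : ℤ} {v : V} (h : v ∈ d.grading r) (t : ℤ) (w : M) :
    W.ot t v w = W.act v (r - 1 - t) w := by
  unfold WeakMod.ot
  rw [finsum_eq_single _ r fun x hx => by
    rw [d.proj_eq_zero h (Ne.symm hx), W.act_zero_left, LinearMap.zero_apply]]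
  rw [d.proj_eq_self h]

lemma o_eq_ot (v : V) (w : M) : W.o v w = W.ot 0 v w := by
  unfold WeakMod.o WeakMod.ot
  exact finsum_congr fun r => by rw [sub_zero]

end WeakMod

namespace AdmMod

variable {V M : Type} [AddCommGroup V] [Module ℂ V] [AddCommGroup M] [Module ℂ M]
variable {d : VOA V} (A : AdmMod d M)

lemma act_vanish {r s : ℤ} {u : V} {w : M} (hu : u ∈ d.grading r) (hw : w ∈ A.gr s)
    {j : ℤ} (hj : r + s ≤ j) : A.act u j w = 0 := by
  have h := A.gr_act r u hu j s w hw
  rw [A.gr_neg _ (by omega)] at h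
  simpa using h

lemma ot_mem (a b : ℕ) (v : V) {w : M} (hw : w ∈ A.gr (a : ℤ)) :
    A.toWeakMod.ot ((b : ℤ) - (a : ℤ)) v w ∈ A.gr (b : ℤ) := by
  unfold WeakMod.ot
  refine finsum_mem_submodule _ _ fun r => ?_
  have h := A.gr_act r (d.proj r v) (d.proj_mem r v) (r - 1 - ((b : ℤ) - a)) a w hw
  have harg : r + (a : ℤ) - (r - 1 - ((b : ℤ) - a)) - 1 = (b : ℤ) := by ring
  rwa [harg] at h

lemma Lneg1_mod (u : V) (q : ℤ) (w : M) :
    A.act (d.mode d.conformal 0 u) q w = (-q : ℂ) • A.act u (q - 1) w := by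
  have key : d.mode d.conformal 0 u = d.mode u (-2) d.vacuum := by
    have h1 := d.Lneg1_deriv u (-1)
    have h2 : d.mode (d.mode d.conformal 0 u) (-1) d.vacuum = d.mode d.conformal 0 u :=
      d.creation_neg_one _
    rw [h1, LinearMap.smul_apply] at h2
    rw [← h2]
    norm_num
  have B := A.toWeakMod.borcherds (q + 1) (-1) (-2) u d.vacuum w
  have hL : (∑ᶠ i : ℕ, cbinom (q + 1) i •
        A.act (d.mode u (-2 + i) d.vacuum) (q + 1 + -1 - i) w)
      = A.act (d.mode u (-2) d.vacuum) q w + ((q : ℂ) + 1) • A.act u (q - 1) w := by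
    have hsupp : (Function.support fun i : ℕ =>
        cbinom (q + 1) i • A.act (d.mode u (-2 + i) d.vacuum) (q + 1 + -1 - i) w)
        ⊆ (({0, 1} : Finset ℕ) : Set ℕ) := by
      intro i hi
      simp only [Function.mem_support] at hi
      by_contra hmem
      simp only [Finset.coe_insert, Finset.coe_singleton, Set.mem_insert_iff,
        Set.mem_singleton_iff, not_or] at hmem
      apply hi
      rw [d.creation u (-2 + i) (by omega), A.toWeakMod.act_zero_left,
        LinearMap.zero_apply, smul_zero]
    rw [finsum_eq_finset_sum_of_support_subset _ hsupp]
    rw [Finset.sum_pair (by norm_num : (0 : ℕ) ≠ 1)]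
    have e0 : (-2 + ((0 : ℕ) : ℤ)) = -2 := by norm_num
    have e0' : (q + 1 + -1 - ((0 : ℕ) : ℤ)) = q := by push_cast; ring
    have e1 : (-2 + ((1 : ℕ) : ℤ)) = -1 := by norm_num
    have e1' : (q + 1 + -1 - ((1 : ℕ) : ℤ)) = q - 1 := by push_cast; ring
    rw [e0, e0', e1, e1', cbinom_zero', one_smul, d.creation_neg_one, cbinom_one']
    push_cast
    ring_nf
  have hR : (∑ᶠ i : ℕ, ((-1 : ℂ) ^ i * cbinom (-2) i) •
      (A.act u (q + 1 + -2 - i) (A.act d.vacuum (-1 + i) w)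
        - (-1 : ℂ) ^ (-2 : ℤ) • A.act d.vacuum (-1 + -2 - i) (A.act u (q + 1 + i) w)))
      = A.act u (q - 1) w := by
    rw [finsum_eq_single _ 0 (fun i hi => by
      rw [A.vacuum_act w (-1 + i), if_neg (by omega), map_zero,
        A.vacuum_act _ (-1 + -2 - i), if_neg (by omega), smul_zero, sub_zero, smul_zero])]
    have e0 : (-1 + ((0 : ℕ) : ℤ)) = -1 := by norm_num
    have e0' : (q + 1 + -2 - ((0 : ℕ) : ℤ)) = q - 1 := by push_cast; ring
    have e0'' : (-1 + -2 - ((0 : ℕ) : ℤ)) = -3 := by norm_num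
    rw [e0, e0', e0'', A.vacuum_act w (-1 : ℤ), if_pos rfl,
      A.vacuum_act _ (-3 : ℤ), if_neg (by norm_num), smul_zero, sub_zero,
      pow_zero, cbinom_zero', one_mul, one_smul]
  rw [key]
  have hEq : A.act (d.mode u (-2) d.vacuum) q w + ((q : ℂ) + 1) • A.act u (q - 1) w
      = A.act u (q - 1) w := by rw [← hL, B, hR]
  have h3 : A.act (d.mode u (-2) d.vacuum) q w
      = A.act u (q - 1) w - ((q : ℂ) + 1) • A.act u (q - 1) w := eq_sub_of_add_eq hEq
  rw [h3, show A.act u (q - 1) w - ((q : ℂ) + 1) • A.act u (q - 1) w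
      = ((1 : ℂ) - ((q : ℂ) + 1)) • A.act u (q - 1) w by rw [sub_smul, one_smul]]
  congr 1
  push_cast
  ring

lemma key_F {r s : ℤ} {u v : V} (hu : u ∈ d.grading r) (hv : v ∈ d.grading s)
    {b : ℤ} {w : M} (hw : w ∈ A.gr b) (t k : ℤ) :
    A.toWeakMod.ot t (d.hres (r + b) k u v) w
      = ∑ᶠ i : ℕ, ((-1 : ℂ) ^ i * cbinom (-k) i) •
          A.act u (r + b + -k - i) (A.act v (s + k - 2 - t - b + i) w) := by
  have hL : A.toWeakMod.ot t (d.hres (r + b) k u v) w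
      = ∑ᶠ i : ℕ, cbinom (r + b) i •
          A.act (d.mode u (-k + i) v) (r + b + (s + k - 2 - t - b) - i) w := by
    unfold VOA.hres
    rw [show A.toWeakMod.ot t (∑ᶠ i : ℕ, cbinom (r + b) i • d.mode u ((i : ℤ) - k) v) w
        = A.toWeakMod.otV t w (∑ᶠ i : ℕ, cbinom (r + b) i • d.mode u ((i : ℤ) - k) v)
        from rfl]
    rw [lmap_finsum _ _ (d.hres_support (r + b) k u v)]
    refine finsum_congr fun i => ?_
    rw [map_smul, WeakMod.otV_apply]
    rw [A.toWeakMod.ot_homog (d.grading_mode r s ((i : ℤ) - k) u v hu hv) t w]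
    have e1 : ((i : ℤ) - k) = -k + i := by ring
    rw [e1]
    have e2 : (r + s - (-k + (i : ℤ)) - 1 - 1 - t) = r + b + (s + k - 2 - t - b) - (i : ℤ) := by
      ring
    rw [e2]
  rw [hL, A.toWeakMod.borcherds (r + b) (s + k - 2 - t - b) (-k) u v w]
  refine finsum_congr fun i => ?_
  rw [A.act_vanish hu hw (by omega : r + b ≤ r + b + (i : ℤ)), map_zero, smul_zero, sub_zero]

lemma circ0 (n m : ℕ) (a b : V) {w : M} (hw : w ∈ A.gr (m : ℤ)) :
    A.toWeakMod.ot ((n : ℤ) - (m : ℤ)) (d.circmn n m a b) w = 0 := by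
  induction a using d.homog_induction with
  | h0 =>
    unfold VOA.circmn
    rw [d.bres_zero_left, A.toWeakMod.ot_zero_left]
  | hadd a a' pa pa' =>
    unfold VOA.circmn at pa pa' ⊢
    rw [d.bres_add_left, A.toWeakMod.ot_add_left, pa, pa', add_zero]
  | hsmul c a pa =>
    unfold VOA.circmn at pa ⊢
    rw [d.bres_smul_left, A.toWeakMod.ot_smul_left, pa, smul_zero]
  | hhom r a ha =>
    induction b using d.homog_induction with
    | h0 =>
      unfold VOA.circmn
      rw [d.bres_zero_right, A.toWeakMod.ot_zero_left]
    | hadd b b' pb pb' =>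
      unfold VOA.circmn at pb pb' ⊢
      rw [d.bres_add_right, A.toWeakMod.ot_add_left, pb, pb', add_zero]
    | hsmul c b pb =>
      unfold VOA.circmn at pb ⊢
      rw [d.bres_smul_right, A.toWeakMod.ot_smul_left, pb, smul_zero]
    | hhom sb b hb =>
      unfold VOA.circmn
      rw [d.bres_homog ha, A.key_F ha hb hw]
      refine finsum_eq_zero_of_forall_eq_zero fun i => ?_
      rw [A.act_vanish hb hw (by omega :
        sb + (m : ℤ) ≤ sb + ((n : ℤ) + (m : ℤ) + 2) - 2 - ((n : ℤ) - (m : ℤ)) - (m : ℤ) + (i : ℤ)),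
        map_zero, smul_zero]

lemma otl (t : ℤ) (u : V) (w : M) :
    A.toWeakMod.ot t (d.mode d.conformal 0 u + d.mode d.conformal 1 u) w
      = (t : ℂ) • A.toWeakMod.ot t u w := by
  induction u using d.homog_induction with
  | h0 => rw [map_zero, map_zero, add_zero, A.toWeakMod.ot_zero_left, smul_zero]
  | hadd u u' pu pu' =>
    rw [map_add, map_add, show d.mode d.conformal 0 u + d.mode d.conformal 0 u'
        + (d.mode d.conformal 1 u + d.mode d.conformal 1 u')
        = (d.mode d.conformal 0 u + d.mode d.conformal 1 u)
          + (d.mode d.conformal 0 u' + d.mode d.conformal 1 u') by abel,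
      A.toWeakMod.ot_add_left, pu, pu', A.toWeakMod.ot_add_left, smul_add]
  | hsmul c u pu =>
    rw [map_smul, map_smul, ← smul_add, A.toWeakMod.ot_smul_left, pu,
      A.toWeakMod.ot_smul_left, smul_comm]
  | hhom r u hu =>
    have h1 : d.mode d.conformal 0 u ∈ d.grading (r + 1) := by
      have := d.grading_mode 2 r 0 d.conformal u d.conformal_mem hu
      rwa [show (2 : ℤ) + r - 0 - 1 = r + 1 by ring] at this
    have h0 : d.mode d.conformal 1 u = (r : ℂ) • u := d.L0_eigen r u hu
    rw [A.toWeakMod.ot_add_left, A.toWeakMod.ot_homog h1 t w, A.Lneg1_mod,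
      h0, A.toWeakMod.ot_smul_left, A.toWeakMod.ot_homog hu t w]
    rw [show (r + 1 - 1 - t : ℤ) = r - t by ring, show (r - t - 1 : ℤ) = r - 1 - t by ring]
    rw [← add_smul]
    congr 1
    push_cast
    ring

end AdmMod

lemma collapse {β : Type*} [AddCommGroup β] [Module ℂ β] (p : ℕ) (M₀ : ℤ) (T : ℤ → β)
    (hT : ∀ z : ℤ, (p : ℤ) < z → T z = 0) :
    (∑ i ∈ Finset.range (p + 1), ∑ j ∈ Finset.range (p + 1),
      (((-1 : ℂ) ^ i * cbinom (M₀ + i) i) * ((-1 : ℂ) ^ j * cbinom (-(M₀ + i + 1)) j)) •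
        T ((i : ℤ) + j))
      = T 0 := by
  have hg0 : ∀ i j : ℕ, p < i + j →
      (((-1 : ℂ) ^ i * cbinom (M₀ + i) i) * ((-1 : ℂ) ^ j * cbinom (-(M₀ + i + 1)) j)) •
        T ((i : ℤ) + j) = 0 := fun i j h => by
    rw [hT ((i : ℤ) + j) (by omega), smul_zero]
  have step1 : (∑ i ∈ Finset.range (p + 1), ∑ j ∈ Finset.range (p + 1),
      (((-1 : ℂ) ^ i * cbinom (M₀ + i) i) * ((-1 : ℂ) ^ j * cbinom (-(M₀ + i + 1)) j)) •
        T ((i : ℤ) + j))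
      = ∑ l ∈ Finset.range (p + 1), ∑ i ∈ Finset.range (l + 1),
        (((-1 : ℂ) ^ i * cbinom (M₀ + i) i) *
          ((-1 : ℂ) ^ (l - i) * cbinom (-(M₀ + i + 1)) (l - i))) • T ((i : ℤ) + (l - i : ℕ)) := by
    rw [Finset.sum_sigma' (Finset.range (p + 1)) (fun _ => Finset.range (p + 1))
      (fun i j => (((-1 : ℂ) ^ i * cbinom (M₀ + i) i) *
        ((-1 : ℂ) ^ j * cbinom (-(M₀ + i + 1)) j)) • T ((i : ℤ) + j))]
    rw [Finset.sum_sigma' (Finset.range (p + 1)) (fun l => Finset.range (l + 1))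
      (fun l i => (((-1 : ℂ) ^ i * cbinom (M₀ + i) i) *
        ((-1 : ℂ) ^ (l - i) * cbinom (-(M₀ + i + 1)) (l - i))) • T ((i : ℤ) + (l - i : ℕ)))]
    rw [← Finset.sum_filter_of_ne
      (p := fun x : (_ : ℕ) × ℕ => x.1 + x.2 ≤ p)
      (fun x _ hne => by
        by_contra hc
        push_neg at hc
        exact hne (hg0 _ _ (by omega)))]
    refine Finset.sum_nbij' (fun x => ⟨x.1 + x.2, x.1⟩) (fun y => ⟨y.2, y.1 - y.2⟩)
      ?_ ?_ ?_ ?_ ?_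
    · intro a ha
      simp only [Finset.mem_filter, Finset.mem_sigma, Finset.mem_range] at ha ⊢
      omega
    · intro a ha
      simp only [Finset.mem_filter, Finset.mem_sigma, Finset.mem_range] at ha ⊢
      omega
    · intro a ha
      simp only [Finset.mem_filter, Finset.mem_sigma, Finset.mem_range] at ha
      ext <;> simp <;> omega
    · intro a ha
      simp only [Finset.mem_sigma, Finset.mem_range] at ha
      ext <;> simp <;> omega
    · intro a ha
      simp only [Finset.mem_filter, Finset.mem_sigma, Finset.mem_range] at ha
      have h1 : a.1 + a.2 - a.1 = a.2 := by omega
      rw [h1]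
  rw [step1]
  have step2 : ∀ l ∈ Finset.range (p + 1), (∑ i ∈ Finset.range (l + 1),
      (((-1 : ℂ) ^ i * cbinom (M₀ + i) i) *
        ((-1 : ℂ) ^ (l - i) * cbinom (-(M₀ + i + 1)) (l - i))) • T ((i : ℤ) + (l - i : ℕ)))
      = (if l = 0 then (1 : ℂ) else 0) • T l := by
    intro l _
    have hcast : ∀ i ∈ Finset.range (l + 1), ((i : ℤ) + ((l - i : ℕ) : ℤ)) = (l : ℤ) := by
      intro i hi
      rw [Finset.mem_range] at hi
      omega
    have hcoef : ∀ i ∈ Finset.range (l + 1),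
        (((-1 : ℂ) ^ i * cbinom (M₀ + i) i) *
          ((-1 : ℂ) ^ (l - i) * cbinom (-(M₀ + i + 1)) (l - i)))
        = cbinom (-(M₀ + 1)) i * cbinom (M₀ + l) (l - i) := by
      intro i hi
      rw [Finset.mem_range] at hi
      have hn1 : cbinom (-(M₀ + i + 1)) (l - i) = (-1 : ℂ) ^ (l - i) * cbinom (M₀ + i + (l - i : ℕ)) (l - i) := by
        have := cbinom_neg (M₀ + i) (l - i)
        rwa [show (-(M₀ + (i : ℤ) + 1)) = -(M₀ + i + 1) from by ring] at this
      have hn2 : cbinom (-(M₀ + 1)) i = (-1 : ℂ) ^ i * cbinom (M₀ + i) i := cbinom_neg M₀ i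
      have harg : (M₀ + (i : ℤ) + ((l - i : ℕ) : ℤ)) = M₀ + l := by omega
      rw [hn1, harg, hn2]
      rw [show (-1 : ℂ) ^ (l - i) * ((-1 : ℂ) ^ (l - i) * cbinom (M₀ + l) (l - i))
          = cbinom (M₀ + l) (l - i) from by
        rw [← mul_assoc, ← pow_add, ← two_mul, pow_mul]; norm_num]
    rw [Finset.sum_congr rfl fun i hi => by rw [hcoef i hi, hcast i hi]]
    rw [← Finset.sum_smul, cbinom_key M₀ l]
  rw [Finset.sum_congr rfl step2]
  rw [Finset.sum_eq_single 0 (fun l _ hl => by rw [if_neg hl, zero_smul])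
    (fun h => absurd (Finset.mem_range.mpr (by omega)) h)]
  rw [if_pos rfl, one_smul]
  norm_num

namespace AdmMod

variable {V M : Type} [AddCommGroup V] [Module ℂ V] [AddCommGroup M] [Module ℂ M]
variable {d : VOA V} (A : AdmMod d M)

lemma master_homog (m p n : ℕ) {r s : ℤ} {u v : V} (hu : u ∈ d.grading r)
    (hv : v ∈ d.grading s) {w : M} (hw : w ∈ A.gr (m : ℤ)) :
    A.toWeakMod.ot ((n : ℤ) - (m : ℤ)) (d.starmpn m p n u v) w
      = A.act u (r - 1 - ((n : ℤ) - (p : ℤ))) (A.act v (s - 1 - ((p : ℤ) - (m : ℤ))) w) := by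
  have hT : ∀ z : ℤ, (p : ℤ) < z →
      A.act u (r - 1 - ((n : ℤ) - (p : ℤ)) - z)
        (A.act v (s - 1 - ((p : ℤ) - (m : ℤ)) + z) w) = 0 := by
    intro z hz
    rw [A.act_vanish hv hw (by omega : s + (m : ℤ) ≤ s - 1 - ((p : ℤ) - (m : ℤ)) + z), map_zero]
  have main : ∀ i : ℕ, A.toWeakMod.ot ((n : ℤ) - (m : ℤ))
      (d.bres (m : ℤ) ((m : ℤ) + (n : ℤ) - (p : ℤ) + (i : ℤ) + 1) u v) w
      = ∑ j ∈ Finset.range (p + 1),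
          ((-1 : ℂ) ^ j * cbinom (-((m : ℤ) + (n : ℤ) - (p : ℤ) + (i : ℤ) + 1)) j) •
            A.act u (r - 1 - ((n : ℤ) - (p : ℤ)) - ((i : ℤ) + (j : ℤ)))
              (A.act v (s - 1 - ((p : ℤ) - (m : ℤ)) + ((i : ℤ) + (j : ℤ))) w) := by
    intro i
    rw [d.bres_homog hu, A.key_F hu hv hw ((n : ℤ) - (m : ℤ))
      ((m : ℤ) + (n : ℤ) - (p : ℤ) + (i : ℤ) + 1)]
    have conv1 : ∀ j : ℕ,
        ((-1 : ℂ) ^ j * cbinom (-((m : ℤ) + (n : ℤ) - (p : ℤ) + (i : ℤ) + 1)) j) •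
          A.act u (r + (m : ℤ) + -((m : ℤ) + (n : ℤ) - (p : ℤ) + (i : ℤ) + 1) - (j : ℤ))
            (A.act v (s + ((m : ℤ) + (n : ℤ) - (p : ℤ) + (i : ℤ) + 1) - 2
              - ((n : ℤ) - (m : ℤ)) - (m : ℤ) + (j : ℤ)) w)
        = ((-1 : ℂ) ^ j * cbinom (-((m : ℤ) + (n : ℤ) - (p : ℤ) + (i : ℤ) + 1)) j) •
          A.act u (r - 1 - ((n : ℤ) - (p : ℤ)) - ((i : ℤ) + (j : ℤ)))
            (A.act v (s - 1 - ((p : ℤ) - (m : ℤ)) + ((i : ℤ) + (j : ℤ))) w) := by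
      intro j
      rw [show (r + (m : ℤ) + -((m : ℤ) + (n : ℤ) - (p : ℤ) + (i : ℤ) + 1) - (j : ℤ))
          = r - 1 - ((n : ℤ) - (p : ℤ)) - ((i : ℤ) + (j : ℤ)) from by ring,
        show (s + ((m : ℤ) + (n : ℤ) - (p : ℤ) + (i : ℤ) + 1) - 2
            - ((n : ℤ) - (m : ℤ)) - (m : ℤ) + (j : ℤ))
          = s - 1 - ((p : ℤ) - (m : ℤ)) + ((i : ℤ) + (j : ℤ)) from by ring]
    rw [finsum_congr conv1]
    refine finsum_eq_finset_sum_of_support_subset _ ?_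
    intro j hj
    simp only [Function.mem_support] at hj
    simp only [Finset.coe_range, Set.mem_Iio]
    by_contra hc
    push_neg at hc
    exact hj (by rw [hT ((i : ℤ) + (j : ℤ)) (by omega), smul_zero])
  have lhs_eq : A.toWeakMod.ot ((n : ℤ) - (m : ℤ)) (d.starmpn m p n u v) w
      = ∑ i ∈ Finset.range (p + 1),
          ((-1 : ℂ) ^ i * cbinom ((m : ℤ) + (n : ℤ) - (p : ℤ) + (i : ℤ)) i) •
            A.toWeakMod.ot ((n : ℤ) - (m : ℤ))
              (d.bres (m : ℤ) ((m : ℤ) + (n : ℤ) - (p : ℤ) + (i : ℤ) + 1) u v) w := by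
    show A.toWeakMod.otV ((n : ℤ) - (m : ℤ)) w (d.starmpn m p n u v) = _
    unfold VOA.starmpn
    rw [map_sum]
    exact Finset.sum_congr rfl fun i _ => by rw [map_smul]; rfl
  rw [lhs_eq, Finset.sum_congr rfl fun i _ => by
    rw [main i, Finset.smul_sum]]
  have hmul : ∀ i ∈ Finset.range (p + 1), ∀ j ∈ Finset.range (p + 1),
      ((-1 : ℂ) ^ i * cbinom ((m : ℤ) + (n : ℤ) - (p : ℤ) + (i : ℤ)) i) •
        (((-1 : ℂ) ^ j * cbinom (-((m : ℤ) + (n : ℤ) - (p : ℤ) + (i : ℤ) + 1)) j) •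
          A.act u (r - 1 - ((n : ℤ) - (p : ℤ)) - ((i : ℤ) + (j : ℤ)))
            (A.act v (s - 1 - ((p : ℤ) - (m : ℤ)) + ((i : ℤ) + (j : ℤ))) w))
      = (((-1 : ℂ) ^ i * cbinom (((m : ℤ) + (n : ℤ) - (p : ℤ)) + i) i) *
          ((-1 : ℂ) ^ j * cbinom (-(((m : ℤ) + (n : ℤ) - (p : ℤ)) + i + 1)) j)) •
          A.act u (r - 1 - ((n : ℤ) - (p : ℤ)) - ((i : ℤ) + (j : ℤ)))
            (A.act v (s - 1 - ((p : ℤ) - (m : ℤ)) + ((i : ℤ) + (j : ℤ))) w) := by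
    intro i _ j _
    rw [smul_smul]
  rw [Finset.sum_congr rfl fun i hi => Finset.sum_congr rfl fun j hj => hmul i hi j hj]
  have hc := collapse p ((m : ℤ) + (n : ℤ) - (p : ℤ))
    (fun z => A.act u (r - 1 - ((n : ℤ) - (p : ℤ)) - z)
      (A.act v (s - 1 - ((p : ℤ) - (m : ℤ)) + z) w)) hT
  rw [hc, sub_zero, add_zero]

lemma master (m p n : ℕ) (u v : V) {w : M} (hw : w ∈ A.gr (m : ℤ)) :
    A.toWeakMod.ot ((n : ℤ) - (m : ℤ)) (d.starmpn m p n u v) w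
      = A.toWeakMod.ot ((n : ℤ) - (p : ℤ)) u (A.toWeakMod.ot ((p : ℤ) - (m : ℤ)) v w) := by
  induction u using d.homog_induction with
  | h0 => rw [d.starmpn_zero_left, A.toWeakMod.ot_zero_left, A.toWeakMod.ot_zero_left]
  | hadd u u' pu pu' =>
    rw [d.starmpn_add_left, A.toWeakMod.ot_add_left, pu, pu', A.toWeakMod.ot_add_left]
  | hsmul c u pu =>
    rw [d.starmpn_smul_left, A.toWeakMod.ot_smul_left, pu, A.toWeakMod.ot_smul_left]
  | hhom r u hu =>
    induction v using d.homog_induction with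
    | h0 => rw [d.starmpn_zero_right, A.toWeakMod.ot_zero_left, A.toWeakMod.ot_zero_left,
        A.toWeakMod.ot_zero_right]
    | hadd v v' pv pv' =>
      rw [d.starmpn_add_right, A.toWeakMod.ot_add_left, pv, pv', A.toWeakMod.ot_add_left,
        A.toWeakMod.ot_add_right]
    | hsmul c v pv =>
      rw [d.starmpn_smul_right, A.toWeakMod.ot_smul_left, pv, A.toWeakMod.ot_smul_left,
        A.toWeakMod.ot_smul_right]
    | hhom s v hv =>
      rw [A.master_homog m p n hu hv hw, A.toWeakMod.ot_homog hu, A.toWeakMod.ot_homog hv]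

lemma okill (p : ℕ) {x : V} (hx : x ∈ d.On p) {y : M} (hy : y ∈ A.gr (p : ℤ)) :
    A.toWeakMod.ot 0 x y = 0 := by
  induction hx using Submodule.span_induction with
  | mem z hz =>
    rcases hz with hz | hz
    · obtain ⟨a, b, rfl⟩ := hz
      have h1 : d.circn p a b = d.circmn p p a b := by
        unfold VOA.circn VOA.circmn
        rw [show (2 * (p : ℤ) + 2) = (p : ℤ) + (p : ℤ) + 2 from by ring]
      have h2 := A.circ0 p p a b hy
      rw [sub_self] at h2
      rw [h1, h2]
    · obtain ⟨a, rfl⟩ := hz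
      have := A.otl 0 a y
      rwa [Int.cast_zero, zero_smul] at this
  | zero => rw [A.toWeakMod.ot_zero_left]
  | add z z' _ _ pz pz' => rw [A.toWeakMod.ot_add_left, pz, pz', add_zero]
  | smul c z _ pz => rw [A.toWeakMod.ot_smul_left, pz, smul_zero]

end AdmMod

/-- `v + O_{n,m}(V) ↦ o_{n,m}(v)|_{M(m)}` is a well-defined homomorphism of
`A_n(V)`-`A_m(V)`-bimodules `A_{n,m}(V) → Hom(M(m), M(n))`, where `o_{n,m}(v) = o_{n-m}(v)`:
it kills `O_{n,m}(V)`, maps `M(m)` into `M(n)`, and intertwines the left and right actions. -/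
theorem stmt17 {M : Type} [AddCommGroup M] [Module ℂ M] (d : VOA V) (A : AdmMod d M)
    (n m : ℕ) :
    (∀ v ∈ d.Onm n m, ∀ w ∈ A.gr (m : ℤ), A.toWeakMod.ot ((n : ℤ) - (m : ℤ)) v w = 0) ∧
    (∀ v : V, ∀ w ∈ A.gr (m : ℤ),
      A.toWeakMod.ot ((n : ℤ) - (m : ℤ)) v w ∈ A.gr (n : ℤ)) ∧
    (∀ a v : V, ∀ w ∈ A.gr (m : ℤ),
      A.toWeakMod.ot ((n : ℤ) - (m : ℤ)) (d.starmpn m n n a v) w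
        = A.toWeakMod.o a (A.toWeakMod.ot ((n : ℤ) - (m : ℤ)) v w)) ∧
    (∀ v a : V, ∀ w ∈ A.gr (m : ℤ),
      A.toWeakMod.ot ((n : ℤ) - (m : ℤ)) (d.starmpn m m n v a) w
        = A.toWeakMod.ot ((n : ℤ) - (m : ℤ)) v (A.toWeakMod.o a w)) := by
  refine ⟨?_, ?_, ?_, ?_⟩
  · intro v hv w hw
    induction hv using Submodule.span_induction with
    | mem z hz =>
      rcases hz with (((hz | hz) | hz) | hz)
      · obtain ⟨a, b, rfl⟩ := hz
        exact A.circ0 n m a b hw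
      · obtain ⟨u, rfl⟩ := hz
        rw [A.toWeakMod.ot_add_left, A.otl, A.toWeakMod.ot_smul_left, ← add_smul,
          show ((((n : ℤ) - (m : ℤ)) : ℤ) : ℂ) + ((m : ℂ) - (n : ℂ)) = 0 from by
            push_cast; ring,
          zero_smul]
      · obtain ⟨u, a, b, c, p₁, p₂, p₃, rfl⟩ := hz
        rw [A.master m p₃ n u _ hw, A.toWeakMod.ot_sub_left,
          A.master m p₁ p₃ _ c hw, A.master p₁ p₂ p₃ a b (A.ot_mem m p₁ c hw),
          A.master m p₂ p₃ a _ hw, A.master m p₁ p₂ b c hw, sub_self,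
          A.toWeakMod.ot_zero_right]
      · obtain ⟨p, u, x, v', hx, rfl⟩ := hz
        rw [A.master m p n _ v' hw, A.master p p n u x (A.ot_mem m p v' hw), sub_self,
          A.okill p hx (A.ot_mem m p v' hw), A.toWeakMod.ot_zero_right]
    | zero => rw [A.toWeakMod.ot_zero_left]
    | add z z' _ _ pz pz' => rw [A.toWeakMod.ot_add_left, pz, pz', add_zero]
    | smul c z _ pz => rw [A.toWeakMod.ot_smul_left, pz, smul_zero]
  · intro v w hw
    exact A.ot_mem m n v hw
  · intro a v w hw
    rw [A.master m n n a v hw, sub_self, ← A.toWeakMod.o_eq_ot]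
  · intro v a w hw
    rw [A.master m m n v a hw, sub_self, ← A.toWeakMod.o_eq_ot]
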